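/- arXiv:1112.0246 — 5 statements merged into one kernel-verified Lean document; each statement's English description precedes it below -/
import Mathlib

section
/- For all integers i and j, the commutator [A_{1,2i+1}, A_{1,2j+1}] = A_{1,2i+1}·A_{1,2j+1} − A_{1,2j+1}·A_{1,2i+1} equals the integer scalar multiple 4(i−j)·A_{1,2(i+j)+1}. (Equivalently, the structure constants of the algebra generated by the additional symmetries of the two-component BKP hierarchy satisfy c_{1,2i+1;1,2j+1}^{q,r} = 4(i−j)δ_{q,1}δ_{r,2(i+j)+1}.) -/
/-!
From `L M = M L + 1`, the defect `E n = L^n M - M L^n - n L^(n-1)` satisfies `E (n+1) = E n · L`;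
as `E 0 = 0` and `L` is a unit, `L^n M = M L^n + n L^(n-1)` for every integer `n`. Hence
`A_{1,l} = 2 M L^l + (l-1) L^(l-1)`, and the brackets `[M L^a, M L^b] = (a-b) M L^(a+b-1)` and
`[M L^a, L^b] = -b L^(a+b-1)` give the Witt-type relation `[A_{1,l}, A_{1,m}] = 2(l-m) A_{1,l+m-1}`;
the theorem is its case `l = 2i+1`, `m = 2j+1`.
-/

def orlovSchulmanA {R : Type*} [Ring R] (L : Rˣ) (M : R) (l : ℤ) : R :=
  M * ((L ^ l : Rˣ) : R) + ((L ^ (l - 1) : Rˣ) : R) * M * L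

section

variable {R : Type*} [Ring R]

attribute [local instance] LieRing.ofAssociativeRing

theorem val_zpow_mul_val_zpow (L : Rˣ) (a b : ℤ) :
    ((L ^ a : Rˣ) : R) * ((L ^ b : Rˣ) : R) = ((L ^ (a + b) : Rˣ) : R) := by
  rw [← Units.val_mul, ← zpow_add]

theorem lie_val_zpow_val_zpow (L : Rˣ) (a b : ℤ) :
    ⁅((L ^ a : Rˣ) : R), ((L ^ b : Rˣ) : R)⁆ = 0 :=
  commute_iff_lie_eq.mp ((Commute.refl L).zpow_zpow a b).units_val

variable {L : Rˣ} {M : R}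

theorem val_zpow_mul_eq_mul_val_zpow_add_zsmul (hLM : (L : R) * M - M * L = 1) (n : ℤ) :
    ((L ^ n : Rˣ) : R) * M = M * ((L ^ n : Rˣ) : R) + n • ((L ^ (n - 1) : Rˣ) : R) := by
  set E : ℤ → R := fun n =>
    ((L ^ n : Rˣ) : R) * M - M * ((L ^ n : Rˣ) : R) - n • ((L ^ (n - 1) : Rˣ) : R) with hE
  have hsucc (n : ℤ) : E (n + 1) = E n * L := by
    have hL : (L : R) * M = M * L + 1 := by rw [← hLM, add_sub_cancel]
    simp only [hE, zpow_add_one, zpow_sub_one, Units.val_mul, sub_mul, smul_mul_assoc, mul_assoc,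
      hL, Units.mul_inv, Units.inv_mul, mul_one, add_smul, one_smul]
    noncomm_ring
  have hiff (n : ℤ) : E n = 0 ↔ E (n + 1) = 0 := by
    rw [hsucc, Units.mul_left_eq_zero]
  have hzero (n : ℤ) : E n = 0 := by
    induction n using Int.induction_on with
    | zero => simp [hE]
    | succ k ih => exact (hiff k).mp ih
    | pred k ih => exact (hiff _).mpr (by rwa [sub_add_cancel])
  rw [← sub_eq_zero, sub_add_eq_sub_sub]
  exact hzero n

theorem lie_mul_val_zpow_mul_val_zpow (hLM : (L : R) * M - M * L = 1) (a b : ℤ) :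
    ⁅M * ((L ^ a : Rˣ) : R), M * ((L ^ b : Rˣ) : R)⁆ =
      (a - b) • (M * ((L ^ (a + b - 1) : Rˣ) : R)) := by
  simp only [Ring.lie_def, mul_assoc, ← mul_assoc _ M, val_zpow_mul_eq_mul_val_zpow_add_zsmul hLM,
    add_mul, smul_mul_assoc, val_zpow_mul_val_zpow]
  rw [sub_add_eq_add_sub, sub_add_eq_add_sub, add_comm b a]
  simp only [mul_add, mul_smul_comm, sub_smul]
  abel

theorem lie_mul_val_zpow_val_zpow (hLM : (L : R) * M - M * L = 1) (a b : ℤ) :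
    ⁅M * ((L ^ a : Rˣ) : R), ((L ^ b : Rˣ) : R)⁆ = -b • ((L ^ (a + b - 1) : Rˣ) : R) := by
  simp only [Ring.lie_def, mul_assoc, ← mul_assoc _ M, val_zpow_mul_eq_mul_val_zpow_add_zsmul hLM,
    add_mul, smul_mul_assoc, val_zpow_mul_val_zpow]
  rw [sub_add_eq_add_sub, add_comm b a, neg_smul]
  abel

theorem lie_val_zpow_mul_val_zpow (hLM : (L : R) * M - M * L = 1) (a b : ℤ) :
    ⁅((L ^ a : Rˣ) : R), M * ((L ^ b : Rˣ) : R)⁆ = a • ((L ^ (a + b - 1) : Rˣ) : R) := by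
  rw [← lie_skew, lie_mul_val_zpow_val_zpow hLM, neg_smul, neg_neg, add_comm b a]

theorem orlovSchulmanA_eq (hLM : (L : R) * M - M * L = 1) (l : ℤ) :
    orlovSchulmanA L M l =
      (2 : ℤ) • (M * ((L ^ l : Rˣ) : R)) + (l - 1) • ((L ^ (l - 1) : Rˣ) : R) := by
  rw [orlovSchulmanA, val_zpow_mul_eq_mul_val_zpow_add_zsmul hLM, add_mul, mul_assoc,
    smul_mul_assoc, ← Units.val_mul, ← Units.val_mul, ← zpow_add_one, ← zpow_add_one,
    sub_add_cancel, sub_add_cancel, two_zsmul, add_assoc]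

theorem commutator_orlovSchulmanA (hLM : (L : R) * M - M * L = 1) (l m : ℤ) :
    orlovSchulmanA L M l * orlovSchulmanA L M m - orlovSchulmanA L M m * orlovSchulmanA L M l =
      (2 * (l - m)) • orlovSchulmanA L M (l + m - 1) := by
  change ⁅orlovSchulmanA L M l, orlovSchulmanA L M m⁆ = _
  simp only [orlovSchulmanA_eq hLM, lie_add, add_lie, lie_smul, smul_lie,
    lie_mul_val_zpow_mul_val_zpow hLM, lie_mul_val_zpow_val_zpow hLM,
    lie_val_zpow_mul_val_zpow hLM, lie_val_zpow_val_zpow]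
  rw [show l + (m - 1) - 1 = l + m - 1 - 1 by ring, show l - 1 + m - 1 = l + m - 1 - 1 by ring]
  module

end

/-- For the Orlov–Schulman generators `A l = M * L^l + L^(l-1) * M * L`
(with `[L, M] = 1`, `L` invertible), one has
`[A (2i+1), A (2j+1)] = 4(i-j) • A (2(i+j)+1)` for all integers `i, j`. -/
theorem commutator_A_one_odd {R : Type*} [Ring R] (L : Rˣ) (M : R)
    (hLM : (L : R) * M - M * (L : R) = 1)
    (A : ℤ → R)
    (hA : ∀ l : ℤ, A l = M * ((L ^ l : Rˣ) : R) + ((L ^ (l - 1) : Rˣ) : R) * M * (L : R))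
    (i j : ℤ) :
    A (2 * i + 1) * A (2 * j + 1) - A (2 * j + 1) * A (2 * i + 1)
      = (4 * (i - j)) • A (2 * (i + j) + 1) := by
  obtain rfl : A = orlovSchulmanA L M := funext hA
  rw [commutator_orlovSchulmanA hLM, show 2 * i + 1 + (2 * j + 1) - 1 = 2 * (i + j) + 1 by ring]
  congr 1
  ring
end

section
/- For every integer j ≥ −1, the element B_j commutes with 𝓛, i.e. B_j·𝓛 = 𝓛·B_j. (This is the identity [B_j, 𝓛] = −L^{(2n−2)(j+1)} + L̂^{2(j+1)} = 0, which makes the Virasoro flows ∂𝓛/∂s_j = [−(B_j)_−, 𝓛] of the Drinfeld–Sokolov hierarchy of type D_n well defined.) -/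
/-!
Write `k = 2n - 2`. From `⁅L, M⁆ = 1` one gets `⁅L ^ m, M⁆ = m L ^ (m - 1)` for every integer `m`,
so the bracket of `𝓛 = L ^ k` with the symmetrized term `M L ^ (kj + 1) + L ^ (kj) M L` is
`2k 𝓛 ^ (j + 1)`. The same computation for the pair `(L̂⁻¹, M̂)` gives `-4 𝓛 ^ (j + 1)` for the
hatted term, and the weights `1 / (4n - 4) = 1 / (2k)` and `1 / 4` make the two contributions cancel.
-/

attribute [local instance] LieRing.ofAssociativeRing

namespace Units

variable {R : Type*} [Ring R] {L : Rˣ} {M : R}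

theorem lie_val_zpow_of_lie_eq_one (hLM : ⁅(L : R), M⁆ = 1) (m : ℤ) :
    ⁅(↑(L ^ m) : R), M⁆ = m • ↑(L ^ (m - 1)) := by
  rw [Ring.lie_def] at hLM
  let defect (m : ℤ) : R := ↑(L ^ m) * M - M * ↑(L ^ m) - m • ↑(L ^ (m - 1))
  have step (m : ℤ) : defect (m + 1) = defect m * L := by
    have hm : (↑(L ^ (m - 1)) : R) * L = ↑(L ^ m) := by
      rw [← val_mul, ← zpow_add_one, sub_add_cancel]
    simp only [defect, zpow_add_one, val_mul, add_sub_cancel_right, add_smul, one_smul]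
    linear_combination (norm := noncomm_ring) (↑(L ^ m) : R) * hLM + m • hm
  suffices defect m = 0 by rwa [Ring.lie_def, ← sub_eq_zero]
  induction m using Int.induction_on with
  | zero => simp [defect]
  | succ i ih => rw [step, ih, zero_mul]
  | pred i ih =>
    have h := step (-i - 1)
    rwa [sub_add_cancel, ih, eq_comm, L.isUnit.mul_left_eq_zero] at h

theorem lie_val_zpow_symmetrized (hLM : ⁅(L : R), M⁆ = 1) (a k : ℤ) :
    ⁅(↑(L ^ k) : R), M * ↑(L ^ (a + 1)) + ↑(L ^ a) * M * L⁆ = (2 * k) • ↑(L ^ (a + k)) := by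
  have hM := lie_val_zpow_of_lie_eq_one hLM k
  rw [Ring.lie_def] at hM ⊢
  have collapse₁ : (↑(L ^ (k - 1)) : R) * ↑(L ^ (a + 1)) = ↑(L ^ (a + k)) := by
    rw [← val_mul, ← zpow_add]; ring_nf
  have collapse₂ : (↑(L ^ a) : R) * ↑(L ^ (k - 1)) * L = ↑(L ^ (a + k)) := by
    rw [← val_mul, ← zpow_add, ← val_mul, ← zpow_add_one]; ring_nf
  have comm₁ : (↑(L ^ k) : R) * ↑(L ^ (a + 1)) = ↑(L ^ (a + 1)) * ↑(L ^ k) := by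
    rw [← val_mul, ← val_mul, zpow_mul_comm]
  have comm₂ : (↑(L ^ k) : R) * ↑(L ^ a) = ↑(L ^ a) * ↑(L ^ k) := by
    rw [← val_mul, ← val_mul, zpow_mul_comm]
  have comm₃ : (↑(L ^ k) : R) * L = L * ↑(L ^ k) := by
    rw [← val_mul, ← val_mul, ← zpow_add_one, ← zpow_one_add, add_comm]
  rw [mul_smul, two_smul]
  linear_combination (norm := noncomm_ring) hM * ↑(L ^ (a + 1)) + ↑(L ^ a) * hM * L
    + M * comm₁ + comm₂ * M * L + ↑(L ^ a) * M * comm₃ + k • collapse₁ + k • collapse₂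

theorem lie_val_zpow_symmetrized_of_lie_inv (hLM : ⁅((L⁻¹ : Rˣ) : R), M⁆ = 1) (a k : ℤ) :
    ⁅(↑(L ^ k) : R), M * ↑(L ^ (a - 1)) + ↑(L ^ a) * M * ↑L⁻¹⁆ = -(2 * k) • ↑(L ^ (a + k)) := by
  have h := lie_val_zpow_symmetrized hLM (-a) (-k)
  simp only [inv_zpow', neg_neg, neg_add', mul_neg, sub_neg_eq_add] at h
  exact h

end Units

theorem Bj_commutes_with_Lax_general {R : Type*} [Ring R] [Algebra ℚ R]
    (n : ℤ) (hn : 3 ≤ n)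
    (L Lh : Rˣ) (M Mh : R)
    (hLM : (L : R) * M - M * (L : R) = 1)
    (hLMh : ((Lh⁻¹ : Rˣ) : R) * Mh - Mh * ((Lh⁻¹ : Rˣ) : R) = 1)
    (hred : ((L ^ (2 * n - 2) : Rˣ) : R) = ((Lh ^ (2 : ℤ) : Rˣ) : R))
    (B : ℤ → R)
    (hB : ∀ j : ℤ, B j =
      (4 * (n : ℚ) - 4)⁻¹ • (M * ((L ^ ((2 * n - 2) * j + 1) : Rˣ) : R)
          + ((L ^ ((2 * n - 2) * j) : Rˣ) : R) * M * (L : R))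
      + (4 : ℚ)⁻¹ • (Mh * ((Lh ^ (2 * j - 1) : Rˣ) : R)
          + ((Lh ^ (2 * j) : Rˣ) : R) * Mh * ((Lh⁻¹ : Rˣ) : R)))
    (j : ℤ) :
    B j * ((L ^ (2 * n - 2) : Rˣ) : R) = ((L ^ (2 * n - 2) : Rˣ) : R) * B j := by
  have hL : ⁅(L : R), M⁆ = 1 := (Ring.lie_def _ _).trans hLM
  have hLh : ⁅((Lh⁻¹ : Rˣ) : R), Mh⁆ = 1 := (Ring.lie_def _ _).trans hLMh
  have hpow : L ^ ((2 * n - 2) * j + (2 * n - 2)) = Lh ^ (2 * j + 2) := by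
    rw [← mul_add_one, ← mul_add_one (2 : ℤ), zpow_mul, zpow_mul, Units.ext hred]
  have hcoeff :
      (4 * n - 4 : ℚ)⁻¹ * ((2 * (2 * n - 2) : ℤ) : ℚ) + 4⁻¹ * ((-(2 * 2) : ℤ) : ℚ) = 0 := by
    have : (4 * n - 4 : ℚ) ≠ 0 := by
      have : (3 : ℚ) ≤ n := by exact_mod_cast hn
      linarith
    rw [show ((2 * (2 * n - 2) : ℤ) : ℚ) = 4 * n - 4 by push_cast; ring, inv_mul_cancel₀ this]
    norm_num
  rw [eq_comm, ← sub_eq_zero, ← Ring.lie_def, hB j, lie_add, lie_smul, lie_smul,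
    Units.lie_val_zpow_symmetrized hL, hred, Units.lie_val_zpow_symmetrized_of_lie_inv hLh, hpow,
    ← Int.cast_smul_eq_zsmul ℚ, ← Int.cast_smul_eq_zsmul ℚ, smul_smul, smul_smul, ← add_smul,
    hcoeff, zero_smul]

/-- For every integer `j ≥ -1`, the operator `B j` commutes with
`𝓛 = L^(2n-2) = L̂²`, i.e. `B j * 𝓛 = 𝓛 * B j`. -/
theorem Bj_commutes_with_Lax {R : Type*} [Ring R] [Algebra ℚ R]
    (n : ℤ) (hn : 3 ≤ n)
    (L Lh : Rˣ) (M Mh : R)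
    (hLM : (L : R) * M - M * (L : R) = 1)
    (hLMh : ((Lh⁻¹ : Rˣ) : R) * Mh - Mh * ((Lh⁻¹ : Rˣ) : R) = 1)
    (hred : ((L ^ (2 * n - 2) : Rˣ) : R) = ((Lh ^ (2 : ℤ) : Rˣ) : R))
    (B : ℤ → R)
    (hB : ∀ j : ℤ, B j =
      (4 * (n : ℚ) - 4)⁻¹ • (M * ((L ^ ((2 * n - 2) * j + 1) : Rˣ) : R)
          + ((L ^ ((2 * n - 2) * j) : Rˣ) : R) * M * (L : R))
      + (4 : ℚ)⁻¹ • (Mh * ((Lh ^ (2 * j - 1) : Rˣ) : R)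
          + ((Lh ^ (2 * j) : Rˣ) : R) * Mh * ((Lh⁻¹ : Rˣ) : R)))
    (j : ℤ) (hj : -1 ≤ j) :
    B j * ((L ^ (2 * n - 2) : Rˣ) : R) = ((L ^ (2 * n - 2) : Rˣ) : R) * B j :=
  Bj_commutes_with_Lax_general n hn L Lh M Mh hLM hLMh hred B hB j
end

section
/- For every integer j ≥ −1, B_j = B_{−1}·𝓛^{j+1}. -/
/-!
For a Weyl pair `U * M - M * U = 1`, pushing `M` to the right through `U ^ q` gives
`symmProd U M k * U ^ q = symmProd U M (k + q) - q • U ^ (k + q)`. Now `B j` is a combination of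
`symmProd L M ((2n-2) j)` and `symmProd L̂⁻¹ M̂ (-2j)`, and `𝓛 = L ^ (2n-2) = (L̂⁻¹) ^ (-2)`, so
multiplying `B (-1)` by `𝓛 ^ (j + 1)` gives `B j` plus the correction
`(-(2n-2)(j+1)/(4n-4) + 2(j+1)/4) • 𝓛 ^ j = 0`.
-/

section Weyl

variable {R : Type*} [Ring R] {U : Rˣ} {M : R}

theorem mul_eq_mul_sub_one_of_mul_sub_mul_eq_one (h : (U : R) * M - M * U = 1) :
    M * U = U * M - 1 :=
  eq_sub_of_add_eq (sub_eq_iff_eq_add'.mp h).symm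

theorem mul_zpow_of_mul_sub_mul_eq_one (h : (U : R) * M - M * U = 1) (k : ℤ) :
    M * ↑(U ^ k) = ↑(U ^ k) * M - k • ↑(U ^ (k - 1)) := by
  have step (k : ℤ) : (↑(U ^ k) * M - k • ↑(U ^ (k - 1)) : R) * U
      = ↑(U ^ (k + 1)) * M - (k + 1) • ↑(U ^ k) := by
    rw [sub_mul, smul_mul_assoc, mul_assoc, mul_eq_mul_sub_one_of_mul_sub_mul_eq_one h, mul_sub,
      mul_one, ← mul_assoc, ← Units.val_mul, ← Units.val_mul, ← zpow_add_one, ← zpow_add_one,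
      sub_add_cancel, add_smul, one_smul]
    abel
  induction k using Int.induction_on with
  | zero => simp
  | succ k ih => rw [add_sub_cancel_right, ← step, ← ih, zpow_add_one, Units.val_mul, mul_assoc]
  | pred k ih =>
    rw [← Units.mul_left_inj U, step, mul_assoc, ← Units.val_mul, ← zpow_add_one, sub_add_cancel,
      ih]

variable (U M) in
def symmProd (k : ℤ) : R := M * ↑(U ^ (k + 1)) + ↑(U ^ k) * M * U

theorem symmProd_eq (h : (U : R) * M - M * U = 1) (k : ℤ) :
    symmProd U M k = (2 : ℤ) • (↑(U ^ (k + 1)) * M) - (k + 2) • ↑(U ^ k) := by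
  rw [symmProd, mul_zpow_of_mul_sub_mul_eq_one h, add_sub_cancel_right, mul_assoc,
    mul_eq_mul_sub_one_of_mul_sub_mul_eq_one h, mul_sub, mul_one, ← mul_assoc, ← Units.val_mul,
    ← zpow_add_one]
  module

theorem symmProd_mul_zpow (h : (U : R) * M - M * U = 1) (k q : ℤ) :
    symmProd U M k * ↑(U ^ q) = symmProd U M (k + q) - q • ↑(U ^ (k + q)) := by
  rw [symmProd_eq h, symmProd_eq h, sub_mul, smul_mul_assoc, smul_mul_assoc, mul_assoc,
    mul_zpow_of_mul_sub_mul_eq_one h q, mul_sub, mul_smul_comm, ← mul_assoc, ← Units.val_mul,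
    ← Units.val_mul, ← Units.val_mul, ← zpow_add, ← zpow_add, ← zpow_add,
    show k + 1 + (q - 1) = k + q by ring, show k + 1 + q = k + q + 1 by ring]
  module

end Weyl

theorem Bj_eq_Bneg1_mul_Lax_pow_general {R : Type*} [Ring R] [Algebra ℚ R]
    (n : ℤ) (hn : 3 ≤ n)
    (L Lh : Rˣ) (M Mh : R)
    (hLM : (L : R) * M - M * (L : R) = 1)
    (hLMh : ((Lh⁻¹ : Rˣ) : R) * Mh - Mh * ((Lh⁻¹ : Rˣ) : R) = 1)
    (hred : ((L ^ (2 * n - 2) : Rˣ) : R) = ((Lh ^ (2 : ℤ) : Rˣ) : R))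
    (B : ℤ → R)
    (hB : ∀ j : ℤ, B j =
      (4 * (n : ℚ) - 4)⁻¹ • (M * ((L ^ ((2 * n - 2) * j + 1) : Rˣ) : R)
          + ((L ^ ((2 * n - 2) * j) : Rˣ) : R) * M * (L : R))
      + (4 : ℚ)⁻¹ • (Mh * ((Lh ^ (2 * j - 1) : Rˣ) : R)
          + ((Lh ^ (2 * j) : Rˣ) : R) * Mh * ((Lh⁻¹ : Rˣ) : R)))
    (j : ℤ) :
    B j = B (-1) * (((L ^ (2 * n - 2)) ^ (j + 1) : Rˣ) : R) := by
  set a := 2 * n - 2 with ha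
  have hB_symm (j : ℤ) : B j = (4 * (n : ℚ) - 4)⁻¹ • symmProd L M (a * j)
      + (4 : ℚ)⁻¹ • symmProd Lh⁻¹ Mh (-(2 * j)) := by
    rw [hB, symmProd, symmProd, inv_zpow', inv_zpow', neg_neg,
      show -(-(2 * j) + 1) = 2 * j - 1 by ring]
  have hLax : L ^ a = Lh⁻¹ ^ (-2 : ℤ) := by
    rw [inv_zpow', neg_neg]; exact Units.ext hred
  have hL_shift : symmProd L M (a * -1) * ↑((L ^ a) ^ (j + 1))
      = symmProd L M (a * j) - (a * (j + 1)) • ↑((L ^ a) ^ j) := by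
    rw [← zpow_mul, ← zpow_mul, symmProd_mul_zpow hLM, show a * -1 + a * (j + 1) = a * j by ring]
  have hLh_shift : symmProd Lh⁻¹ Mh (-(2 * -1)) * ↑((L ^ a) ^ (j + 1))
      = symmProd Lh⁻¹ Mh (-(2 * j)) + (2 * (j + 1)) • ↑((L ^ a) ^ j) := by
    rw [hLax, ← zpow_mul, ← zpow_mul, symmProd_mul_zpow hLMh,
      show -(2 * -1) + -2 * (j + 1) = -(2 * j) by ring, show -2 * j = -(2 * j) by ring]
    module
  have hn_sub_one : (n : ℚ) - 1 ≠ 0 := by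
    have : (3 : ℚ) ≤ n := by exact_mod_cast hn
    linarith
  rw [hB_symm j, hB_symm (-1), add_mul, smul_mul_assoc, smul_mul_assoc, hL_shift, hLh_shift]
  match_scalars
  · ring
  · ring
  · rw [ha]
    push_cast
    field_simp
    ring

/-- For every integer `j ≥ -1`, `B j = B (-1) * 𝓛^(j+1)` where `𝓛 = L^(2n-2) = L̂²`. -/
theorem Bj_eq_Bneg1_mul_Lax_pow {R : Type*} [Ring R] [Algebra ℚ R]
    (n : ℤ) (hn : 3 ≤ n)
    (L Lh : Rˣ) (M Mh : R)
    (hLM : (L : R) * M - M * (L : R) = 1)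
    (hLMh : ((Lh⁻¹ : Rˣ) : R) * Mh - Mh * ((Lh⁻¹ : Rˣ) : R) = 1)
    (hred : ((L ^ (2 * n - 2) : Rˣ) : R) = ((Lh ^ (2 : ℤ) : Rˣ) : R))
    (B : ℤ → R)
    (hB : ∀ j : ℤ, B j =
      (4 * (n : ℚ) - 4)⁻¹ • (M * ((L ^ ((2 * n - 2) * j + 1) : Rˣ) : R)
          + ((L ^ ((2 * n - 2) * j) : Rˣ) : R) * M * (L : R))
      + (4 : ℚ)⁻¹ • (Mh * ((Lh ^ (2 * j - 1) : Rˣ) : R)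
          + ((Lh ^ (2 * j) : Rˣ) : R) * Mh * ((Lh⁻¹ : Rˣ) : R)))
    (j : ℤ) (hj : -1 ≤ j) :
    B j = B (-1) * (((L ^ (2 * n - 2)) ^ (j + 1) : Rˣ) : R) :=
  Bj_eq_Bneg1_mul_Lax_pow_general n hn L Lh M Mh hLM hLMh hred B hB j
end

section
/- If in addition B_{−1} = L, then for every integer j ≥ −1 one has B_j = L^{(2n−2)(j+1)+1}. (This is the algebraic identity underlying the derivation of the Virasoro constraints from the string equation for the Drinfeld–Sokolov hierarchy of type D_n.) -/
/-!
Commuting `M` past powers of `L` with `[L, M] = 1` gives `M L^k = L^k M - k L^(k-1)`, and likewise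
for `L̂⁻¹, M̂`. Consequently `B_{-1} 𝓛^c` agrees with `B_{c-1}` except that its `L`-half carries an
extra `-(2n-2)c/(4n-4) · 𝓛^(c-1)` and its `L̂`-half an extra `+2c/4 · 𝓛^(c-1)`. These cancel, so
`B_j = B_{-1} 𝓛^(j+1)` for every `j`, and the string equation `B_{-1} = L` gives the claim.
-/

namespace Units

variable {R : Type*} [Ring R] {U : Rˣ} {M : R}

theorem val_zpow_mul_val (U : Rˣ) (k : ℤ) :
    ((U ^ k : Rˣ) : R) * U = ((U ^ (k + 1) : Rˣ) : R) := by
  rw [← val_mul, zpow_add_one]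

theorem mul_val_of_mul_sub_mul_eq_one (h : (U : R) * M - M * U = 1) : M * U = U * M - 1 := by
  rw [← h, sub_sub_cancel]

theorem mul_val_zpow_of_mul_sub_mul_eq_one (h : (U : R) * M - M * U = 1) (k : ℤ) :
    M * ((U ^ k : Rˣ) : R) = ((U ^ k : Rˣ) : R) * M - k • ((U ^ (k - 1) : Rˣ) : R) := by
  have hMU := mul_val_of_mul_sub_mul_eq_one h
  induction k using Int.induction_on with
  | zero => simp
  | succ i ih =>
    rw [← val_zpow_mul_val, ← mul_assoc, ih, sub_mul, mul_assoc, hMU, mul_sub, ← mul_assoc,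
      val_zpow_mul_val, smul_mul_assoc, val_zpow_mul_val, sub_add_cancel, add_sub_cancel_right,
      mul_one]
    module
  | pred i ih =>
    rw [← mul_left_inj U, mul_assoc, val_zpow_mul_val, sub_add_cancel, ih, sub_mul, smul_mul_assoc,
      val_zpow_mul_val, sub_add_cancel, mul_assoc, hMU, mul_sub, ← mul_assoc, val_zpow_mul_val,
      sub_add_cancel, mul_one]
    module

end Units

open Units

section SymmMul

variable {R : Type*} [Ring R]

def symmMul (U : Rˣ) (M : R) (a : ℤ) : R :=
  M * ((U ^ (a + 1) : Rˣ) : R) + ((U ^ a : Rˣ) : R) * M * U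

theorem symmMul_inv (U : Rˣ) (M : R) (b : ℤ) :
    symmMul U⁻¹ M (-b)
      = M * ((U ^ (b - 1) : Rˣ) : R) + ((U ^ b : Rˣ) : R) * M * ((U⁻¹ : Rˣ) : R) := by
  rw [symmMul, inv_zpow', inv_zpow', neg_neg, neg_add, neg_neg, ← sub_eq_add_neg]

variable {U : Rˣ} {M : R}

theorem symmMul_eq (h : (U : R) * M - M * U = 1) (a : ℤ) :
    symmMul U M a = (2 : ℤ) • (((U ^ (a + 1) : Rˣ) : R) * M) - (a + 2) • ((U ^ a : Rˣ) : R) := by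
  rw [symmMul, mul_val_zpow_of_mul_sub_mul_eq_one h, add_sub_cancel_right, mul_assoc,
    mul_val_of_mul_sub_mul_eq_one h, mul_sub, ← mul_assoc, val_zpow_mul_val, mul_one]
  module

theorem symmMul_mul_val_zpow (h : (U : R) * M - M * U = 1) {a b : ℤ} (c : ℤ) (hab : a + c = b) :
    symmMul U M a * ((U ^ c : Rˣ) : R) = symmMul U M b - c • ((U ^ b : Rˣ) : R) := by
  subst hab
  rw [symmMul_eq h, symmMul_eq h, sub_mul, smul_mul_assoc, smul_mul_assoc, mul_assoc,
    mul_val_zpow_of_mul_sub_mul_eq_one h, mul_sub, ← mul_assoc, mul_smul_comm, ← val_mul,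
    ← val_mul, ← zpow_add, ← zpow_add, ← val_mul, ← zpow_add,
    show a + 1 + c = a + c + 1 by ring, show a + 1 + (c - 1) = a + c by ring]
  module

end SymmMul

theorem Bj_eq_L_pow_of_string_general {R : Type*} [Ring R] [Algebra ℚ R]
    (n : ℤ) (hn : 3 ≤ n)
    (L Lh : Rˣ) (M Mh : R)
    (hLM : (L : R) * M - M * (L : R) = 1)
    (hLMh : ((Lh⁻¹ : Rˣ) : R) * Mh - Mh * ((Lh⁻¹ : Rˣ) : R) = 1)
    (hred : ((L ^ (2 * n - 2) : Rˣ) : R) = ((Lh ^ (2 : ℤ) : Rˣ) : R))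
    (B : ℤ → R)
    (hB : ∀ j : ℤ, B j =
      (4 * (n : ℚ) - 4)⁻¹ • (M * ((L ^ ((2 * n - 2) * j + 1) : Rˣ) : R)
          + ((L ^ ((2 * n - 2) * j) : Rˣ) : R) * M * (L : R))
      + (4 : ℚ)⁻¹ • (Mh * ((Lh ^ (2 * j - 1) : Rˣ) : R)
          + ((Lh ^ (2 * j) : Rˣ) : R) * Mh * ((Lh⁻¹ : Rˣ) : R)))
    (hstr : B (-1) = (L : R))
    (j : ℤ) :
    B j = ((L ^ ((2 * n - 2) * (j + 1) + 1) : Rˣ) : R) := by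
  have hB_symmMul (j : ℤ) : B j = (4 * (n : ℚ) - 4)⁻¹ • symmMul L M ((2 * n - 2) * j)
      + (4 : ℚ)⁻¹ • symmMul Lh⁻¹ Mh (-(2 * j)) := by
    rw [hB, symmMul, symmMul_inv]
  have hL_pow (k : ℤ) : ((L ^ ((2 * n - 2) * k) : Rˣ) : R) = ((Lh⁻¹ ^ (-(2 * k)) : Rˣ) : R) := by
    rw [inv_zpow', neg_neg, zpow_mul, zpow_mul, Units.ext hred]
  have hn_one : (n : ℚ) - 1 ≠ 0 := by
    have : (3 : ℚ) ≤ n := by exact_mod_cast hn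
    linarith
  have hshift : B j = B (-1) * ((L ^ ((2 * n - 2) * (j + 1)) : Rˣ) : R) := by
    rw [hB_symmMul, hB_symmMul (-1), add_mul, smul_mul_assoc, smul_mul_assoc,
      symmMul_mul_val_zpow hLM _
        (by ring : (2 * n - 2) * (-1) + (2 * n - 2) * (j + 1) = (2 * n - 2) * j),
      hL_pow (j + 1),
      symmMul_mul_val_zpow hLMh _ (by ring : -(2 * -1) + -(2 * (j + 1)) = -(2 * j)), ← hL_pow j]
    match_scalars <;> field_simp
    ring
  rw [hshift, hstr, ← val_mul, ← zpow_one_add, add_comm]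

/-- If in addition `B (-1) = L`, then for every integer `j ≥ -1`,
`B j = L^((2n-2)(j+1)+1)`. -/
theorem Bj_eq_L_pow_of_string {R : Type*} [Ring R] [Algebra ℚ R]
    (n : ℤ) (hn : 3 ≤ n)
    (L Lh : Rˣ) (M Mh : R)
    (hLM : (L : R) * M - M * (L : R) = 1)
    (hLMh : ((Lh⁻¹ : Rˣ) : R) * Mh - Mh * ((Lh⁻¹ : Rˣ) : R) = 1)
    (hred : ((L ^ (2 * n - 2) : Rˣ) : R) = ((Lh ^ (2 : ℤ) : Rˣ) : R))
    (B : ℤ → R)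
    (hB : ∀ j : ℤ, B j =
      (4 * (n : ℚ) - 4)⁻¹ • (M * ((L ^ ((2 * n - 2) * j + 1) : Rˣ) : R)
          + ((L ^ ((2 * n - 2) * j) : Rˣ) : R) * M * (L : R))
      + (4 : ℚ)⁻¹ • (Mh * ((Lh ^ (2 * j - 1) : Rˣ) : R)
          + ((Lh ^ (2 * j) : Rˣ) : R) * Mh * ((Lh⁻¹ : Rˣ) : R)))
    (hstr : B (-1) = (L : R))
    (j : ℤ) (hj : -1 ≤ j) :
    B j = ((L ^ ((2 * n - 2) * (j + 1) + 1) : Rˣ) : R) :=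
  Bj_eq_L_pow_of_string_general n hn L Lh M Mh hLM hLMh hred B hB hstr j
end

section
/- For all integers i, j ≥ −1 with i + j ≥ −1, the operators L̃_j = V_j − ∂/∂t_{(2n−2)(j+1)+1} satisfy the Virasoro commutation relation [L̃_i, L̃_j] = (i−j)·L̃_{i+j} + δ_{i+j,0}·(n/12)·(i³−i)·Id as linear operators on P. (These are the operators appearing in the Virasoro constraints L̃_j τ = 0 for solutions of the Drinfeld–Sokolov hierarchy of type D_n satisfying the string equation.) -/
/-!
The operators `p_k` and `p̂_k` (odd `k`) form two commuting Heisenberg algebras,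
`[p_a, p_c] = 2a·δ_{a+c,0}`. For even `S` the normally ordered quadratic operators
`A_S = Σ_i :p_i p_{S-i}:` then satisfy `[p_c, A_S] = 4c·p_{S+c}` and
`[A_{S₁}, A_{S₂}] = 4(S₁ - S₂)·A_{S₁+S₂} + δ_{S₁+S₂,0}·(2S₁³ + 4S₁)/3`, the cubic term being the
anomaly produced by restoring normal order. Writing `∂/∂t_k = p_k/2`,
`L̃_j = A_{(2n-2)j}/(8n-8) + Â_{2j}/8 - p_{(2n-2)(j+1)+1}/2 + const`, and the Virasoro relation
follows by bilinearity: the shift terms combine to `-(i-j)/2·p_{(2n-2)(i+j+1)+1}`, two shifts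
commute because both indices are positive, and the central terms add up to `n/12·(i³ - i)` after
the constant is accounted for. The infinite sums are harmless because a polynomial involving only
the variables `t_k`, `t̂_k` with `k ≤ B` is killed by all but finitely many summands.
-/

open MvPolynomial

noncomputable section

/-- The polynomial algebra over ℚ in variables `t_{2m+1}` (index `(false, m)`) and
`t̂_{2m+1}` (index `(true, m)`). -/
abbrev PP : Type := MvPolynomial (Bool × ℕ) ℚ

/-- The operator `p_k` (for `b = false`) resp. `p̂_k` (for `b = true`):
`2·∂/∂t_k` for odd positive `k`, multiplication by `(-k)·t_{-k}` for odd negative `k`,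
and `0` for even `k`. -/
def pOp (b : Bool) (k : ℤ) : PP → PP := fun q =>
  if 0 < k ∧ Odd k then (2 : ℚ) • pderiv (b, (k.toNat - 1) / 2) q
  else if k < 0 ∧ Odd k then ((-k : ℤ) : ℚ) • (X (b, ((-k).toNat - 1) / 2) * q)
  else 0

/-- The normal-ordered product `:p_a p_c:`, equal to `p_c ∘ p_a` if `a > 0 > c`
and `p_a ∘ p_c` otherwise. -/
def nord (b : Bool) (a c : ℤ) : PP → PP :=
  if 0 < a ∧ c < 0 then fun q => pOp b c (pOp b a q) else fun q => pOp b a (pOp b c q)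

/-- The Virasoro operator
`V_j = (1/(8n-8))·Σ_{i∈ℤ} :p_i p_{(2n-2)j-i}: + (1/8)·Σ_{i∈ℤ} :p̂_i p̂_{2j-i}:
+ δ_{j,0}·(n/24)·(1 + 1/(2n-2))·Id`, acting pointwise (on each polynomial only finitely
many summands act nontrivially). -/
def Vop (n : ℕ) (j : ℤ) : PP → PP := fun q =>
  (8 * (n : ℚ) - 8)⁻¹ • (∑ᶠ i : ℤ, nord false i ((2 * (n : ℤ) - 2) * j - i) q)
  + (8 : ℚ)⁻¹ • (∑ᶠ i : ℤ, nord true i (2 * j - i) q)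
  + (if j = 0 then (n : ℚ) / 24 * (1 + (2 * (n : ℚ) - 2)⁻¹) else 0) • q

/-- The operator `L̃_j = V_j - ∂/∂t_{(2n-2)(j+1)+1}` (for `j ≥ -1`); the variable
`t_{(2n-2)(j+1)+1} = t_{2(n-1)(j+1)+1}` has index `(false, (n-1)(j+1))`. -/
def Ltil (n : ℕ) (j : ℤ) : PP → PP := fun q =>
  Vop n j q - pderiv (false, (((n : ℤ) - 1) * (j + 1)).toNat) q

theorem MvPolynomial.pderiv_pderiv_comm {R σ : Type*} [CommSemiring R] (v w : σ)
    (p : MvPolynomial σ R) : pderiv v (pderiv w p) = pderiv w (pderiv v p) := by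
  induction p using MvPolynomial.induction_on' with
  | add p q hp hq => simp only [map_add, hp, hq]
  | monomial d c =>
    simp only [pderiv_monomial]
    by_cases hvw : v = w
    · subst hvw; rfl
    · rw [tsub_right_comm]
      congr 1
      simp [hvw, Ne.symm hvw]
      ring

theorem MvPolynomial.vars_pderiv_subset {R σ : Type*} [CommSemiring R] (v : σ)
    (p : MvPolynomial σ R) : (pderiv v p).vars ⊆ p.vars := by
  classical
  intro w hw
  obtain ⟨d, hd, hwd⟩ := (mem_vars_iff_mem_support w).1 hw
  rw [mem_support_iff, coeff_pderiv] at hd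
  refine (mem_vars_iff_mem_support w).2 ⟨d + Finsupp.single v 1, ?_, ?_⟩
  · exact mem_support_iff.2 (left_ne_zero_of_mul hd)
  · rw [Finsupp.mem_support_iff] at hwd ⊢
    simp [hwd]

theorem MvPolynomial.pderiv_mem_supported {R σ : Type*} [CommSemiring R] {s : Set σ}
    {p : MvPolynomial σ R} (hp : p ∈ supported R s) (v : σ) : pderiv v p ∈ supported R s := by
  rw [mem_supported] at hp ⊢
  exact (Finset.coe_subset.2 (vars_pderiv_subset v p)).trans hp

lemma Int.odd_iff_exists_nat {a : ℤ} : Odd a ↔ ∃ m : ℕ, a = 2 * m + 1 ∨ a = -(2 * m + 1) := by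
  constructor
  · rintro ⟨k, rfl⟩
    rcases le_or_gt 0 k with hk | hk
    · exact ⟨k.toNat, Or.inl (by omega)⟩
    · exact ⟨(-k - 1).toNat, Or.inr (by omega)⟩
  · rintro ⟨m, rfl | rfl⟩
    · exact ⟨m, rfl⟩
    · exact ⟨-m - 1, by ring⟩

lemma pOp_of_not_odd {k : ℤ} (h : ¬ Odd k) (b : Bool) (q : PP) : pOp b k q = 0 := by
  simp [pOp, h]

lemma pOp_two_mul_add_one (b : Bool) (m : ℕ) (q : PP) :
    pOp b (2 * m + 1) q = (2 : ℚ) • pderiv (b, m) q := by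
  have hm : ((2 * (m : ℤ) + 1).toNat - 1) / 2 = m := by omega
  rw [pOp, if_pos ⟨by omega, ⟨m, rfl⟩⟩, hm]

lemma pOp_neg_two_mul_add_one (b : Bool) (m : ℕ) (q : PP) :
    pOp b (-(2 * m + 1)) q = (2 * m + 1 : ℚ) • (X (b, m) * q) := by
  have hm : ((2 * (m : ℤ) + 1).toNat - 1) / 2 = m := by omega
  rw [pOp, if_neg (by omega), if_pos ⟨by omega, ⟨-m - 1, by ring⟩⟩, neg_neg, hm]
  push_cast
  rfl

def pOpₗ (b : Bool) (k : ℤ) : Module.End ℚ PP where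
  toFun := pOp b k
  map_add' x y := by unfold pOp; split_ifs <;> simp [mul_add, smul_add]
  map_smul' c x := by unfold pOp; split_ifs <;> simp [smul_comm c]

@[simp] lemma pOpₗ_apply (b : Bool) (k : ℤ) (q : PP) : pOpₗ b k q = pOp b k q := rfl

lemma pOp_add (b : Bool) (k : ℤ) (x y : PP) : pOp b k (x + y) = pOp b k x + pOp b k y :=
  (pOpₗ b k).map_add x y

lemma pOp_smul (b : Bool) (k : ℤ) (c : ℚ) (x : PP) : pOp b k (c • x) = c • pOp b k x :=
  (pOpₗ b k).map_smul c x

lemma pOp_sub (b : Bool) (k : ℤ) (x y : PP) : pOp b k (x - y) = pOp b k x - pOp b k y :=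
  (pOpₗ b k).map_sub x y

lemma pOp_sum (b : Bool) (k : ℤ) {ι : Type*} (s : Finset ι) (f : ι → PP) :
    pOp b k (∑ i ∈ s, f i) = ∑ i ∈ s, pOp b k (f i) :=
  map_sum (pOpₗ b k) f s

lemma pOp_zero (b : Bool) (k : ℤ) : pOp b k 0 = 0 := (pOpₗ b k).map_zero

lemma pOp_pos_pOp_neg (b b' : Bool) (m m' : ℕ) (q : PP) :
    pOp b (2 * m + 1) (pOp b' (-(2 * m' + 1)) q) = pOp b' (-(2 * m' + 1)) (pOp b (2 * m + 1) q)
      + (if (b, m) = (b', m') then (2 * (2 * m + 1) : ℚ) else 0) • q := by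
  simp only [pOp_two_mul_add_one, pOp_neg_two_mul_add_one, Derivation.map_smul, pderiv_mul,
    mul_smul_comm]
  by_cases h : (b, m) = (b', m')
  · simp only [Prod.mk.injEq] at h
    obtain ⟨rfl, rfl⟩ := h
    rw [pderiv_X_self, if_pos rfl, one_mul]
    module
  · rw [pderiv_X_of_ne (Ne.symm h), if_neg h, zero_mul]
    module

lemma pOp_comm (b b' : Bool) (a c : ℤ) (q : PP) :
    pOp b a (pOp b' c q) = pOp b' c (pOp b a q)
      + (if b = b' ∧ a + c = 0 ∧ Odd a then (2 * a : ℚ) else 0) • q := by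
  by_cases hao : Odd a; swap
  · simp [pOp_of_not_odd hao, pOp_zero, hao]
  by_cases hco : Odd c; swap
  · have : ¬ (a + c = 0 ∧ Odd a) := fun ⟨h, ha⟩ => hco (by simpa [show c = -a by omega] using ha)
    simp [pOp_of_not_odd hco, pOp_zero, this]
  obtain ⟨m, rfl | rfl⟩ := Int.odd_iff_exists_nat.1 hao <;>
    obtain ⟨m', rfl | rfl⟩ := Int.odd_iff_exists_nat.1 hco
  · rw [if_neg (by omega)]
    simp [pOp_two_mul_add_one, pderiv_pderiv_comm]
  · rw [pOp_pos_pOp_neg]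
    congr 2
    by_cases h : b = b' ∧ m = m'
    · obtain ⟨rfl, rfl⟩ := h
      simp
    · rw [if_neg (by simpa using h), if_neg fun ⟨hb, hm, _⟩ => h ⟨hb, by omega⟩]
  · rw [pOp_pos_pOp_neg, add_assoc, left_eq_add, ← add_smul]
    by_cases h : b = b' ∧ m = m'
    · obtain ⟨rfl, rfl⟩ := h
      rw [if_pos rfl, if_pos ⟨rfl, by ring, hao⟩]
      push_cast
      ring_nf
      exact zero_smul _ q
    · rw [if_neg (by simpa [eq_comm] using h), if_neg fun ⟨hb, hm, _⟩ => h ⟨hb, by omega⟩]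
      simp
  · rw [if_neg (by omega), zero_smul, add_zero]
    simp only [pOp_neg_two_mul_add_one, mul_smul_comm]
    rw [mul_left_comm, smul_comm]

lemma nord_of_pos_of_neg {a c : ℤ} (h : 0 < a ∧ c < 0) (b : Bool) (q : PP) :
    nord b a c q = pOp b c (pOp b a q) := by
  rw [nord, if_pos h]

lemma nord_of_not_pos_neg {a c : ℤ} (h : ¬ (0 < a ∧ c < 0)) (b : Bool) (q : PP) :
    nord b a c q = pOp b a (pOp b c q) := by
  rw [nord, if_neg h]

lemma pOp_pOp_eq_nord (b : Bool) (a c : ℤ) (q : PP) :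
    pOp b a (pOp b c q) = nord b a c q
      + (if 0 < a ∧ a + c = 0 ∧ Odd a then (2 * a : ℚ) else 0) • q := by
  by_cases h : 0 < a ∧ c < 0
  · rw [nord_of_pos_of_neg h, pOp_comm]
    simp [h.1]
  · rw [nord_of_not_pos_neg h, if_neg (by omega), zero_smul, add_zero]

lemma nord_comm (b : Bool) (a c : ℤ) (q : PP) : nord b a c q = nord b c a q := by
  by_cases h : 0 < a ∧ c < 0
  · rw [nord_of_pos_of_neg h, nord_of_not_pos_neg (by omega)]
  by_cases h' : 0 < c ∧ a < 0
  · rw [nord_of_pos_of_neg h', nord_of_not_pos_neg h]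
  rw [nord_of_not_pos_neg h, nord_of_not_pos_neg h', pOp_comm,
    if_neg fun ⟨_, _, ⟨k, _⟩⟩ => by omega, zero_smul, add_zero]

def nordₗ (b : Bool) (a c : ℤ) : Module.End ℚ PP :=
  if 0 < a ∧ c < 0 then pOpₗ b c * pOpₗ b a else pOpₗ b a * pOpₗ b c

lemma nordₗ_apply (b : Bool) (a c : ℤ) (q : PP) : nordₗ b a c q = nord b a c q := by
  unfold nordₗ nord
  split_ifs <;> rfl

/-- Polynomials in the variables `t_k`, `t̂_k` with `k ≤ B` only. -/
abbrev modesLE (B : ℤ) : Subalgebra ℚ PP := supported ℚ {v | 2 * (v.2 : ℤ) + 1 ≤ B}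

lemma modesLE_mono {B B' : ℤ} (h : B ≤ B') : modesLE B ≤ modesLE B' :=
  supported_mono fun _ hv => le_trans hv h

lemma exists_mem_modesLE (q : PP) : ∃ B, 0 ≤ B ∧ q ∈ modesLE B := by
  refine ⟨(q.vars.sup fun v => 2 * v.2 + 1 : ℕ), by positivity, ?_⟩
  refine (supported_mono fun v hv => ?_) (mem_supported_vars q)
  have := Finset.le_sup (f := fun v : Bool × ℕ => 2 * v.2 + 1) hv
  simp only [Set.mem_ofPred_eq]
  omega

lemma pOp_mem_modesLE {B k : ℤ} {q : PP} (hq : q ∈ modesLE B) (b : Bool) (hk : -k ≤ B) :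
    pOp b k q ∈ modesLE B := by
  by_cases hko : Odd k; swap
  · rw [pOp_of_not_odd hko]
    exact zero_mem _
  obtain ⟨m, rfl | rfl⟩ := Int.odd_iff_exists_nat.1 hko
  · rw [pOp_two_mul_add_one]
    exact Subalgebra.smul_mem _ (pderiv_mem_supported hq _) _
  · rw [pOp_neg_two_mul_add_one]
    refine Subalgebra.smul_mem _ (Subalgebra.mul_mem _ (X_mem_supported.2 ?_) hq) _
    simp only [Set.mem_ofPred_eq]
    omega

lemma pOp_eq_zero_of_lt {B k : ℤ} {q : PP} (hq : q ∈ modesLE B) (hB : 0 ≤ B) (b : Bool)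
    (hk : B < k) : pOp b k q = 0 := by
  by_cases hko : Odd k; swap
  · exact pOp_of_not_odd hko b q
  obtain ⟨m, rfl | rfl⟩ := Int.odd_iff_exists_nat.1 hko
  · rw [pOp_two_mul_add_one, pderiv_eq_zero_of_notMem_vars, smul_zero]
    intro hv
    have := mem_supported.1 hq hv
    simp only [Set.mem_ofPred_eq] at this
    omega
  · omega

lemma nord_eq_zero_of_notMem_Icc {B : ℤ} {q : PP} (hq : q ∈ modesLE B) (hB : 0 ≤ B) (b : Bool)
    {S i : ℤ} (hi : i ∉ Finset.Icc (S - B) B) : nord b i (S - i) q = 0 := by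
  rw [Finset.mem_Icc, not_and_or, not_le, not_le] at hi
  by_cases h : 0 < i ∧ S - i < 0
  · rw [nord_of_pos_of_neg h, pOp_eq_zero_of_lt hq hB b (by omega), pOp_zero]
  rw [nord_of_not_pos_neg h]
  by_cases h' : B < S - i
  · rw [pOp_eq_zero_of_lt hq hB b h', pOp_zero]
  · exact pOp_eq_zero_of_lt (pOp_mem_modesLE hq b (by omega)) hB b (by omega)

lemma nord_mem_modesLE {B : ℤ} {q : PP} (hq : q ∈ modesLE B) (hB : 0 ≤ B) (b : Bool)
    (S i : ℤ) : nord b i (S - i) q ∈ modesLE (B + |S|) := by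
  by_cases hi : i ∈ Finset.Icc (S - B) B
  · rw [Finset.mem_Icc] at hi
    have hq' := modesLE_mono (le_add_of_nonneg_right (abs_nonneg S)) hq
    have := abs_le.1 (le_refl |S|)
    by_cases h : 0 < i ∧ S - i < 0
    · rw [nord_of_pos_of_neg h]
      exact pOp_mem_modesLE (pOp_mem_modesLE hq' b (by omega)) b (by omega)
    · rw [nord_of_not_pos_neg h]
      exact pOp_mem_modesLE (pOp_mem_modesLE hq' b (by omega)) b (by omega)
  · rw [nord_eq_zero_of_notMem_Icc hq hB b hi]
    exact zero_mem _

/-- `A_S`, or `Â_S` when `b = true`. -/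
def nordSum (b : Bool) (S : ℤ) (q : PP) : PP := ∑ᶠ i : ℤ, nord b i (S - i) q

lemma nordSum_eq_sum {B : ℤ} {q : PP} (hq : q ∈ modesLE B) (hB : 0 ≤ B) (b : Bool) (S : ℤ)
    {I : Finset ℤ} (hI : Finset.Icc (S - B) B ⊆ I) :
    nordSum b S q = ∑ i ∈ I, nord b i (S - i) q :=
  finsum_eq_sum_of_support_subset _ fun _ hi => by_contra fun hiI =>
    hi (nord_eq_zero_of_notMem_Icc hq hB b fun h => hiI (hI h))

lemma nordSum_mem_modesLE {B : ℤ} {q : PP} (hq : q ∈ modesLE B) (hB : 0 ≤ B) (b : Bool)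
    (S : ℤ) : nordSum b S q ∈ modesLE (B + |S|) := by
  rw [nordSum_eq_sum hq hB b S subset_rfl]
  exact Subalgebra.sum_mem _ fun i _ => nord_mem_modesLE hq hB b S i

def nordSumₗ (b : Bool) (S : ℤ) : Module.End ℚ PP where
  toFun := nordSum b S
  map_add' x y := by
    obtain ⟨Bx, hBx, hx⟩ := exists_mem_modesLE x
    obtain ⟨By, hBy, hy⟩ := exists_mem_modesLE y
    have hx' := modesLE_mono (le_max_left Bx By) hx
    have hy' := modesLE_mono (le_max_right Bx By) hy
    have hB : 0 ≤ max Bx By := le_max_of_le_left hBx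
    simp only [nordSum_eq_sum (add_mem hx' hy') hB b S subset_rfl,
      nordSum_eq_sum hx' hB b S subset_rfl, nordSum_eq_sum hy' hB b S subset_rfl, ← nordₗ_apply,
      map_add, Finset.sum_add_distrib]
  map_smul' c x := by
    obtain ⟨B, hB, hx⟩ := exists_mem_modesLE x
    simp only [nordSum_eq_sum (Subalgebra.smul_mem _ hx c) hB b S subset_rfl,
      nordSum_eq_sum hx hB b S subset_rfl, ← nordₗ_apply, map_smul, Finset.smul_sum,
      RingHom.id_apply]

@[simp] lemma nordSumₗ_apply (b : Bool) (S : ℤ) (q : PP) : nordSumₗ b S q = nordSum b S q := rfl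

lemma pOp_nord_comm (b b' : Bool) (c S i : ℤ) (q : PP) :
    pOp b' c (nord b i (S - i) q) = nord b i (S - i) (pOp b' c q)
      + (if b' = b ∧ c + i = 0 ∧ Odd c then (2 * c : ℚ) else 0) • pOp b (S - i) q
      + (if b' = b ∧ c + (S - i) = 0 ∧ Odd c then (2 * c : ℚ) else 0) • pOp b i q := by
  by_cases h : 0 < i ∧ S - i < 0
  · rw [nord_of_pos_of_neg h, nord_of_pos_of_neg h, pOp_comm b' b c (S - i), pOp_comm b' b c i,
      pOp_add, pOp_smul]
  · rw [nord_of_not_pos_neg h, nord_of_not_pos_neg h, pOp_comm b' b c i, pOp_comm b' b c (S - i),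
      pOp_add, pOp_smul]
    abel

lemma sum_ite_and_eq_smul {ι R M : Type*} [DecidableEq ι] [Semiring R] [AddCommMonoid M]
    [Module R M] {I : Finset ι} {i₀ : ι} (h : i₀ ∈ I) (P : Prop) [Decidable P] (r : R)
    (f : ι → M) :
    ∑ i ∈ I, (if P ∧ i = i₀ then r else 0) • f i = (if P then r else 0) • f i₀ := by
  rw [Finset.sum_eq_single_of_mem i₀ h fun i _ hi => by simp [hi]]
  simp

/-- The two contractions of `p_c` with `:p_i p_{S-i}:` contribute equally; for even `c` both
sides vanish since `S + c` is even. -/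
lemma pOp_nordSum_comm (b b' : Bool) {S : ℤ} (hS : Even S) (c : ℤ) (q : PP) :
    pOp b' c (nordSum b S q) = nordSum b S (pOp b' c q)
      + (if b' = b then (4 * c : ℚ) • pOp b (S + c) q else 0) := by
  obtain ⟨B₀, hB₀, hq₀⟩ := exists_mem_modesLE q
  have hc_abs := abs_le.1 (le_refl |c|)
  have hS_abs := abs_le.1 (le_refl |S|)
  set B := B₀ + |c| + |S|
  have hq : q ∈ modesLE B := modesLE_mono (by omega) hq₀
  have hB : 0 ≤ B := by omega
  rw [nordSum_eq_sum hq hB b S subset_rfl,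
    nordSum_eq_sum (pOp_mem_modesLE hq b' (by omega)) hB b S subset_rfl, pOp_sum]
  simp only [pOp_nord_comm b b' c S, Finset.sum_add_distrib]
  have h₁ : ∀ i : ℤ, (b' = b ∧ c + i = 0 ∧ Odd c) ↔ ((b' = b ∧ Odd c) ∧ i = -c) :=
    fun i => ⟨fun ⟨hb, _, ho⟩ => ⟨⟨hb, ho⟩, by omega⟩, fun ⟨⟨hb, ho⟩, _⟩ => ⟨hb, by omega, ho⟩⟩
  have h₂ : ∀ i : ℤ, (b' = b ∧ c + (S - i) = 0 ∧ Odd c) ↔ ((b' = b ∧ Odd c) ∧ i = S + c) :=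
    fun i => ⟨fun ⟨hb, _, ho⟩ => ⟨⟨hb, ho⟩, by omega⟩, fun ⟨⟨hb, ho⟩, _⟩ => ⟨hb, by omega, ho⟩⟩
  -- `h₂` first: the left side of `h₁` also matches the second condition
  simp only [h₂]
  simp only [h₁]
  rw [sum_ite_and_eq_smul (by simp; omega), sum_ite_and_eq_smul (by simp; omega),
    sub_neg_eq_add, add_assoc, ← add_smul]
  congr 1
  by_cases hb : b' = b
  · by_cases hc : Odd c
    · simp only [hb, hc, and_self, if_true]
      ring_nf
    · have hSc : ¬ Odd (S + c) := fun ⟨k, hk⟩ => by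
        obtain ⟨m, hm⟩ := hS
        exact hc ⟨k - m, by omega⟩
      simp [pOp_of_not_odd hSc]
  · simp [hb]

lemma nordSum_pOp (b : Bool) {S : ℤ} (hS : Even S) (x : ℤ) (q : PP) :
    nordSum b S (pOp b x q) = pOp b x (nordSum b S q) - (4 * x : ℚ) • pOp b (S + x) q := by
  rw [pOp_nordSum_comm b b hS, if_pos rfl, add_sub_cancel_right]

lemma nordSum_pOp_pOp (b : Bool) {S : ℤ} (hS : Even S) (x y : ℤ) (q : PP) :
    nordSum b S (pOp b x (pOp b y q)) - pOp b x (pOp b y (nordSum b S q))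
      = (-4 * x : ℚ) • pOp b (S + x) (pOp b y q) + (-4 * y : ℚ) • pOp b x (pOp b (S + y) q) := by
  rw [nordSum_pOp b hS, nordSum_pOp b hS, pOp_sub, pOp_smul]
  module

/-- The central term comes from restoring the normal order of `p_{S₁+c} p_{S₂-c}`. -/
lemma nordSum_nord_comm (b : Bool) {S₁ S₂ : ℤ} (h₁ : Even S₁) (hpos : S₁ + S₂ = 0 → 0 ≤ S₁)
    (c : ℤ) (q : PP) :
    nordSum b S₁ (nord b c (S₂ - c) q) - nord b c (S₂ - c) (nordSum b S₁ q)
      = (-4 * (S₂ - c) : ℚ) • nord b c (S₁ + S₂ - c) q + (-4 * c : ℚ) • nord b (S₁ + c) (S₂ - c) q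
        + (if Odd c ∧ S₁ + S₂ = 0 ∧ 0 < S₁ + c ∧ c < 0 then (-8 * c * (S₁ + c) : ℚ) else 0)
          • q := by
  by_cases h : 0 < c ∧ S₂ - c < 0
  · have h' : ¬ (0 < S₁ + (S₂ - c) ∧ S₁ + (S₂ - c) + c = 0 ∧ Odd (S₁ + (S₂ - c))) :=
      fun ⟨h', h'', _⟩ => by have := hpos (by omega); omega
    rw [nord_of_pos_of_neg h, nord_of_pos_of_neg h, nordSum_pOp_pOp b h₁,
      pOp_pOp_eq_nord b (S₁ + (S₂ - c)), pOp_pOp_eq_nord b (S₂ - c), if_neg h',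
      if_neg (show ¬ (0 < S₂ - c ∧ _) by omega), if_neg (show ¬ (Odd c ∧ _) by omega),
      nord_comm b (S₁ + (S₂ - c)), nord_comm b (S₂ - c), add_sub_assoc']
    push_cast
    module
  · have h' : ¬ (0 < c ∧ c + (S₁ + (S₂ - c)) = 0 ∧ Odd c) :=
      fun ⟨h', h'', _⟩ => by have := hpos (by omega); omega
    rw [nord_of_not_pos_neg h, nord_of_not_pos_neg h, nordSum_pOp_pOp b h₁,
      pOp_pOp_eq_nord b (S₁ + c), pOp_pOp_eq_nord b c, if_neg h']
    have hodd : Odd (S₁ + c) ↔ Odd c := by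
      obtain ⟨m, hm⟩ := h₁
      constructor <;> rintro ⟨k, hk⟩
      exacts [⟨k - m, by omega⟩, ⟨k + m, by omega⟩]
    have hcond : (0 < S₁ + c ∧ S₁ + c + (S₂ - c) = 0 ∧ Odd (S₁ + c))
        ↔ (Odd c ∧ S₁ + S₂ = 0 ∧ 0 < S₁ + c ∧ c < 0) := by
      rw [hodd]
      constructor
      · rintro ⟨hpos', hsum, ⟨k, hk⟩⟩
        exact ⟨⟨k, hk⟩, by omega, hpos', by have := hpos (by omega); omega⟩
      · rintro ⟨hc, hsum, hpos', -⟩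
        exact ⟨hpos', by omega, hc⟩
    simp only [hcond]
    rw [add_sub_assoc']
    split_ifs <;> push_cast <;> module

lemma sum_smul_nord_eq_sum_Icc {B : ℤ} {q : PP} (hq : q ∈ modesLE B) (hB : 0 ≤ B) (b : Bool)
    (S : ℤ) {I : Finset ℤ} (hI : Finset.Icc (S - B) B ⊆ I) (f : ℤ → ℚ) :
    ∑ c ∈ I, f c • nord b c (S - c) q = ∑ c ∈ Finset.Icc (S - B) B, f c • nord b c (S - c) q :=
  (Finset.sum_subset hI fun c _ hc => by
    rw [nord_eq_zero_of_notMem_Icc hq hB b hc, smul_zero]).symm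

lemma sum_range_two_mul_add_one (M : ℕ) : ∑ k ∈ Finset.range M, (2 * (k : ℚ) + 1) = M ^ 2 := by
  induction M with
  | zero => simp
  | succ M ih => rw [Finset.sum_range_succ, ih]; push_cast; ring

lemma sum_range_odd_mul (M : ℕ) :
    ∑ k ∈ Finset.range M, 8 * (2 * (k : ℚ) + 1) * (2 * M - (2 * k + 1))
      = (16 * (M : ℚ) ^ 3 + 8 * M) / 3 := by
  induction M with
  | zero => simp
  | succ M ih =>
    have hsplit : ∀ k ∈ Finset.range M,
        8 * (2 * (k : ℚ) + 1) * (2 * ((M + 1 : ℕ) : ℚ) - (2 * k + 1))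
          = 8 * (2 * (k : ℚ) + 1) * (2 * M - (2 * k + 1)) + 16 * (2 * k + 1) := fun k _ => by
      push_cast; ring
    rw [Finset.sum_range_succ, Finset.sum_congr rfl hsplit, Finset.sum_add_distrib, ih,
      ← Finset.mul_sum, sum_range_two_mul_add_one]
    push_cast
    ring

/-- The odd `c` with `-S < c < 0` are the `c = -(2k+1)` with `k < S/2`. -/
lemma sum_Icc_central {S N : ℤ} (hS : Even S) (h₀ : 0 ≤ S) (hN : S ≤ N) :
    ∑ c ∈ Finset.Icc (-N) N, (if Odd c ∧ 0 < S + c ∧ c < 0 then (-8 * c * (S + c) : ℚ) else 0)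
      = (2 * (S : ℚ) ^ 3 + 4 * S) / 3 := by
  obtain ⟨M, rfl⟩ : ∃ M : ℕ, S = 2 * M := by
    obtain ⟨k, hk⟩ := hS
    exact ⟨k.toNat, by omega⟩
  have hfilter : (Finset.Icc (-N) N).filter (fun c => Odd c ∧ 0 < 2 * (M : ℤ) + c ∧ c < 0)
      = (Finset.range M).image fun k : ℕ => -(2 * (k : ℤ) + 1) := by
    ext c
    simp only [Finset.mem_filter, Finset.mem_Icc, Finset.mem_image, Finset.mem_range]
    constructor
    · rintro ⟨-, ⟨k, rfl⟩, h₁, h₂⟩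
      exact ⟨(-k - 1).toNat, by omega, by omega⟩
    · rintro ⟨k, hk, rfl⟩
      exact ⟨by omega, ⟨-k - 1, by ring⟩, by omega, by omega⟩
  rw [← Finset.sum_filter, hfilter, Finset.sum_image fun x _ y _ h => by omega]
  push_cast
  rw [show (2 * (2 * M : ℚ) ^ 3 + 4 * (2 * M)) / 3 = (16 * (M : ℚ) ^ 3 + 8 * M) / 3 by ring,
    ← sum_range_odd_mul M]
  exact Finset.sum_congr rfl fun k _ => by ring

lemma nordSum_comm_of_nonneg (b : Bool) {S₁ S₂ : ℤ} (h₁ : Even S₁)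
    (hpos : S₁ + S₂ = 0 → 0 ≤ S₁) (q : PP) :
    nordSum b S₁ (nordSum b S₂ q) - nordSum b S₂ (nordSum b S₁ q)
      = (4 * (S₁ - S₂) : ℚ) • nordSum b (S₁ + S₂) q
        + (if S₁ + S₂ = 0 then (2 * (S₁ : ℚ) ^ 3 + 4 * S₁) / 3 else 0) • q := by
  obtain ⟨B, hB, hq⟩ := exists_mem_modesLE q
  have h₁' := abs_le.1 (le_refl |S₁|)
  have h₂' := abs_le.1 (le_refl |S₂|)
  set N := 2 * (B + |S₁| + |S₂|)
  have hsub : ∀ {S B'}, 0 ≤ B' → |S| + B' ≤ N → Finset.Icc (S - B') B' ⊆ Finset.Icc (-N) N :=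
    fun {S _} _ _ => by
      have := abs_le.1 (le_refl |S|)
      exact Finset.Icc_subset_Icc (by omega) (by omega)
  rw [nordSum_eq_sum hq hB b S₂ (hsub hB (by omega)),
    nordSum_eq_sum (nordSum_mem_modesLE hq hB b S₁) (by omega) b S₂ (hsub (by omega) (by omega)),
    ← nordSumₗ_apply, map_sum, ← Finset.sum_sub_distrib]
  simp only [nordSumₗ_apply, nordSum_nord_comm b h₁ hpos, Finset.sum_add_distrib]
  have hshift : ∑ c ∈ Finset.Icc (-N) N, (-4 * c : ℚ) • nord b (S₁ + c) (S₂ - c) q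
      = ∑ c ∈ Finset.Icc (S₁ + S₂ - B) B, (-4 * (c - S₁) : ℚ) • nord b c (S₁ + S₂ - c) q := by
    have hI : Finset.Icc (S₁ + S₂ - B) B ⊆ (Finset.Icc (-N) N).map (addLeftEmbedding S₁) := by
      rw [Finset.map_add_left_Icc]
      exact Finset.Icc_subset_Icc (by omega) (by omega)
    rw [← sum_smul_nord_eq_sum_Icc hq hB b (S₁ + S₂) hI, Finset.sum_map]
    refine Finset.sum_congr rfl fun c _ => ?_
    simp only [addLeftEmbedding_apply]
    rw [show S₁ + S₂ - (S₁ + c) = S₂ - c by ring]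
    push_cast
    ring_nf
  have hcentral : ∑ c ∈ Finset.Icc (-N) N, (if Odd c ∧ S₁ + S₂ = 0 ∧ 0 < S₁ + c ∧ c < 0
      then (-8 * c * (S₁ + c) : ℚ) else 0) • q
      = (if S₁ + S₂ = 0 then (2 * (S₁ : ℚ) ^ 3 + 4 * S₁) / 3 else 0) • q := by
    rw [← Finset.sum_smul]
    by_cases hS : S₁ + S₂ = 0
    · simp only [hS, true_and, if_true]
      rw [sum_Icc_central h₁ (hpos hS) (by omega)]
    · simp [hS]
  have := abs_add_le S₁ S₂
  rw [hshift, hcentral, sum_smul_nord_eq_sum_Icc hq hB b (S₁ + S₂) (hsub hB (by omega)),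
    ← Finset.sum_add_distrib, nordSum_eq_sum hq hB b (S₁ + S₂) subset_rfl, Finset.smul_sum]
  congr 1
  refine Finset.sum_congr rfl fun c _ => ?_
  rw [← add_smul]
  congr 1
  ring

attribute [local instance] LieRing.ofAssociativeRing

lemma lie_apply_eq_sub (f g : Module.End ℚ PP) (q : PP) : ⁅f, g⁆ q = f (g q) - g (f q) := rfl

lemma lie_pOpₗ_of_pos (b b' : Bool) {a c : ℤ} (ha : 0 < a) (hc : 0 < c) :
    ⁅pOpₗ b a, pOpₗ b' c⁆ = 0 := by
  refine LinearMap.ext fun q => ?_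
  simp only [lie_apply_eq_sub, pOpₗ_apply, LinearMap.zero_apply]
  rw [pOp_comm b b' a c q, if_neg (by omega), zero_smul, add_zero, sub_self]

lemma lie_pOpₗ_nordSumₗ (b b' : Bool) {S : ℤ} (hS : Even S) (c : ℤ) :
    ⁅pOpₗ b' c, nordSumₗ b S⁆ = if b' = b then (4 * c : ℚ) • pOpₗ b (S + c) else 0 := by
  refine LinearMap.ext fun q => ?_
  rw [lie_apply_eq_sub, pOpₗ_apply, nordSumₗ_apply, pOp_nordSum_comm b b' hS]
  split_ifs <;> simp

lemma lie_nordSumₗ_of_nonneg (b : Bool) {S₁ S₂ : ℤ} (h₁ : Even S₁)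
    (hpos : S₁ + S₂ = 0 → 0 ≤ S₁) :
    ⁅nordSumₗ b S₁, nordSumₗ b S₂⁆ = (4 * (S₁ - S₂) : ℚ) • nordSumₗ b (S₁ + S₂)
      + (if S₁ + S₂ = 0 then (2 * (S₁ : ℚ) ^ 3 + 4 * S₁) / 3 else 0) • 1 := by
  refine LinearMap.ext fun q => ?_
  simpa only [lie_apply_eq_sub, LinearMap.add_apply, LinearMap.smul_apply, Module.End.one_apply,
    nordSumₗ_apply] using nordSum_comm_of_nonneg b h₁ hpos q

lemma lie_nordSumₗ (b : Bool) {S₁ S₂ : ℤ} (h₁ : Even S₁) (h₂ : Even S₂) :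
    ⁅nordSumₗ b S₁, nordSumₗ b S₂⁆ = (4 * (S₁ - S₂) : ℚ) • nordSumₗ b (S₁ + S₂)
      + (if S₁ + S₂ = 0 then (2 * (S₁ : ℚ) ^ 3 + 4 * S₁) / 3 else 0) • 1 := by
  by_cases hpos : S₁ + S₂ = 0 → 0 ≤ S₁
  · exact lie_nordSumₗ_of_nonneg b h₁ hpos
  push Not at hpos
  obtain ⟨hS, hneg⟩ := hpos
  rw [← lie_skew, lie_nordSumₗ_of_nonneg b h₂ fun _ => by omega, add_comm S₂, if_pos hS,
    if_pos hS, show S₂ = -S₁ by omega]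
  push_cast
  module

lemma nordSum_nord_of_ne {b b' : Bool} (hb : b ≠ b') {S : ℤ} (hS : Even S) (a c : ℤ) (q : PP) :
    nordSum b S (nord b' a c q) = nord b' a c (nordSum b S q) := by
  have hcomm : ∀ (x : ℤ) (y : PP), nordSum b S (pOp b' x y) = pOp b' x (nordSum b S y) := by
    intro x y
    rw [pOp_nordSum_comm b b' hS, if_neg (Ne.symm hb), add_zero]
  by_cases h : 0 < a ∧ c < 0
  · rw [nord_of_pos_of_neg h, nord_of_pos_of_neg h, hcomm, hcomm]
  · rw [nord_of_not_pos_neg h, nord_of_not_pos_neg h, hcomm, hcomm]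

lemma lie_nordSumₗ_of_ne {b b' : Bool} (hb : b ≠ b') {S : ℤ} (hS : Even S) (S' : ℤ) :
    ⁅nordSumₗ b S, nordSumₗ b' S'⁆ = 0 := by
  refine LinearMap.ext fun q => ?_
  obtain ⟨B, hB, hq⟩ := exists_mem_modesLE q
  have := abs_nonneg S
  rw [lie_apply_eq_sub, nordSumₗ_apply, nordSumₗ_apply, nordSumₗ_apply, nordSumₗ_apply,
    nordSum_eq_sum hq hB b' S' (I := Finset.Icc (S' - (B + |S|)) (B + |S|))
      (Finset.Icc_subset_Icc (by omega) (by omega)),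
    nordSum_eq_sum (nordSum_mem_modesLE hq hB b S) (by omega) b' S' subset_rfl,
    ← nordSumₗ_apply, map_sum]
  simp [nordSum_nord_of_ne hb hS]

/-- `L̃_j` as an endomorphism, with `∂/∂t_k` written as `p_k / 2`. -/
def LtilEnd (n : ℕ) (j : ℤ) : Module.End ℚ PP :=
  (8 * (n : ℚ) - 8)⁻¹ • nordSumₗ false ((2 * n - 2) * j) + (8 : ℚ)⁻¹ • nordSumₗ true (2 * j)
    - (2 : ℚ)⁻¹ • pOpₗ false ((2 * n - 2) * (j + 1) + 1)
    + (if j = 0 then (n : ℚ) / 24 * (1 + (2 * (n : ℚ) - 2)⁻¹) else 0) • 1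

lemma LtilEnd_apply {n : ℕ} (hn : 1 ≤ n) {j : ℤ} (hj : -1 ≤ j) (q : PP) :
    LtilEnd n j q = Ltil n j q := by
  have hm : 0 ≤ ((n : ℤ) - 1) * (j + 1) := mul_nonneg (by omega) (by omega)
  have hidx : (2 * (n : ℤ) - 2) * (j + 1) + 1 = 2 * ((((n : ℤ) - 1) * (j + 1)).toNat : ℕ) + 1 := by
    rw [Int.toNat_of_nonneg hm]
    ring
  rw [Ltil, Vop, LtilEnd, hidx]
  simp only [LinearMap.add_apply, LinearMap.sub_apply, LinearMap.smul_apply, Module.End.one_apply,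
    nordSumₗ_apply, pOpₗ_apply, pOp_two_mul_add_one, nordSum]
  module

lemma lie_LtilEnd {n : ℕ} (hn : 2 ≤ n) {i j : ℤ} (hi : -1 ≤ i) (hj : -1 ≤ j) :
    ⁅LtilEnd n i, LtilEnd n j⁆ = (i - j) • LtilEnd n (i + j)
      + (if i + j = 0 then (n : ℚ) / 12 * ((i : ℚ) ^ 3 - i) else 0) • 1 := by
  -- `lie_smul` and `smul_lie` do not rewrite here: the scalar action in the goal is found through
  -- another `AddCommMonoid PP` instance than the one the `LieAlgebra` structure provides.
  have lie_smul' (c : ℚ) (f g : Module.End ℚ PP) : ⁅f, c • g⁆ = c • ⁅f, g⁆ := lie_smul c f g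
  have smul_lie' (c : ℚ) (f g : Module.End ℚ PP) : ⁅c • f, g⁆ = c • ⁅f, g⁆ := smul_lie c f g
  have lie_one (f : Module.End ℚ PP) : ⁅f, (1 : Module.End ℚ PP)⁆ = 0 :=
    (Commute.one_right f).lie_eq
  have one_lie (f : Module.End ℚ PP) : ⁅(1 : Module.End ℚ PP), f⁆ = 0 :=
    (Commute.one_left f).lie_eq
  have hR (k : ℤ) : Even ((2 * (n : ℤ) - 2) * k) := ⟨(n - 1) * k, by ring⟩
  have hshift (k : ℤ) (hk : -1 ≤ k) : 0 < (2 * (n : ℤ) - 2) * (k + 1) + 1 := by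
    have : 0 ≤ (2 * (n : ℤ) - 2) * (k + 1) := mul_nonneg (by omega) (by omega)
    omega
  simp only [LtilEnd, add_lie, lie_add, sub_lie, lie_sub, smul_lie', lie_smul', lie_one, one_lie,
    smul_zero, add_zero]
  rw [lie_nordSumₗ false (hR i) (hR j), lie_nordSumₗ true (even_two_mul i) (even_two_mul j),
    lie_nordSumₗ_of_ne (by decide) (hR i), lie_nordSumₗ_of_ne (by decide) (even_two_mul i),
    ← lie_skew (nordSumₗ false _) (pOpₗ false _), ← lie_skew (nordSumₗ true _) (pOpₗ false _),
    lie_pOpₗ_nordSumₗ false false (hR j), lie_pOpₗ_nordSumₗ true false (even_two_mul j),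
    lie_pOpₗ_nordSumₗ false false (hR i), lie_pOpₗ_nordSumₗ true false (even_two_mul i),
    lie_pOpₗ_of_pos false false (hshift i hi) (hshift j hj),
    show (2 * (n : ℤ) - 2) * i + (2 * n - 2) * j = (2 * n - 2) * (i + j) by ring,
    show 2 * i + 2 * j = 2 * (i + j) by ring,
    show (2 * (n : ℤ) - 2) * j + ((2 * n - 2) * (i + 1) + 1) = (2 * n - 2) * (i + j + 1) + 1 by
      ring,
    show (2 * (n : ℤ) - 2) * i + ((2 * n - 2) * (j + 1) + 1) = (2 * n - 2) * (i + j + 1) + 1 by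
      ring,
    ← Int.cast_smul_eq_zsmul ℚ]
  simp only [if_true, Bool.false_eq_true, if_false, smul_zero, zero_add, add_zero, sub_zero,
    neg_zero]
  have hn' : (n : ℚ) - 1 ≠ 0 := by
    rw [sub_ne_zero]
    exact_mod_cast (by omega : n ≠ 1)
  by_cases hij : i + j = 0
  · obtain rfl : j = -i := by omega
    simp only [hij, mul_zero, if_true]
    match_scalars <;> field_simp <;> ring
  · have : (2 * (n : ℤ) - 2) * (i + j) ≠ 0 := mul_ne_zero (by omega) hij
    simp only [hij, this, if_false, mul_eq_zero, OfNat.ofNat_ne_zero, false_or, zero_smul,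
      add_zero]
    match_scalars <;> field_simp <;> ring

/-- for `i, j ≥ -1` with `i + j ≥ -1`, the operators
`L̃_j = V_j - ∂/∂t_{(2n-2)(j+1)+1}` satisfy the Virasoro commutation relation
`[L̃_i, L̃_j] = (i-j)·L̃_{i+j} + δ_{i+j,0}·(n/12)·(i³-i)·Id`. -/
theorem Virasoro_commutation_Ltil (n : ℕ) (hn : 3 ≤ n) (i j : ℤ)
    (hi : -1 ≤ i) (hj : -1 ≤ j) (hij : -1 ≤ i + j) (q : PP) :
    Ltil n i (Ltil n j q) - Ltil n j (Ltil n i q)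
      = (i - j) • Ltil n (i + j) q
        + (if i + j = 0 then (n : ℚ) / 12 * ((i : ℚ) ^ 3 - (i : ℚ)) else 0) • q := by
  have hL (k : ℤ) (hk : -1 ≤ k) : Ltil n k = LtilEnd n k :=
    funext fun q => (LtilEnd_apply (by omega) hk q).symm
  rw [hL i hi, hL j hj, hL (i + j) hij]
  simpa only [lie_apply_eq_sub, LinearMap.add_apply, LinearMap.smul_apply, Module.End.one_apply]
    using LinearMap.congr_fun (lie_LtilEnd (by omega) hi hj) q

end
end
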